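/- Consider a finite simple graph G built iteratively from a single vertex, where at each step a new vertex v is added together with edges to a set S of existing vertices with |S| ∈ {0,1,2,3}, and whenever |S| ≥ 2 the vertices of S are required to be pairwise adjacent in the existing graph. Suppose each edge {u,v} carries two nonzero complex weights α(u,v) and α(v,u) with α(u,v)·α(v,u) = 1, and suppose that whenever three vertices u, v, w are pairwise adjacent one has α(u,w) = -α(u,v)·α(v,w). Then for every closed walk (vertex sequence v₀, v₁, …, v_s = v₀ along edges) and every nonzero μ ∈ ℂ, the product (-α(v_{s-1},v_s))⋯(-α(v₀,v₁))·μ equals μ. -/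
import Mathlib

noncomputable def pot {n : ℕ} (G : SimpleGraph (Fin n)) [DecidableRel G.Adj]
    (α : Fin n → Fin n → ℂ) : Fin n → ℂ := fun j =>
  let S := Finset.univ.filter fun i => i < j ∧ G.Adj i j
  if h : S.Nonempty then
    have hlt : S.min' h < j := ((Finset.mem_filter.mp (S.min'_mem h)).2).1
    pot G α (S.min' h) * (-α (S.min' h) j)
  else 1
termination_by j => (j : ℕ)
decreasing_by exact hlt

lemma pot_ne {n : ℕ} (G : SimpleGraph (Fin n)) [DecidableRel G.Adj]
    (α : Fin n → Fin n → ℂ) (hne : ∀ u v, G.Adj u v → α u v ≠ 0) :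
    ∀ j, pot G α j ≠ 0 := by
  suffices H : ∀ m : ℕ, ∀ j : Fin n, (j : ℕ) < m → pot G α j ≠ 0 by
    exact fun j => H ((j : ℕ) + 1) j (Nat.lt_succ_self _)
  intro m
  induction m using Nat.strongRecOn with
  | ind m ih =>
    intro j hj
    rw [pot]
    split
    · rename_i h
      set S := Finset.univ.filter fun i => i < j ∧ G.Adj i j with hS
      obtain ⟨hlt, hadj⟩ := (Finset.mem_filter.mp (S.min'_mem h)).2
      exact mul_ne_zero (ih _ hj _ hlt) (neg_ne_zero.mpr (hne _ _ hadj))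
    · exact one_ne_zero

lemma pot_adj {n : ℕ} (G : SimpleGraph (Fin n)) [DecidableRel G.Adj]
    (hbuild : ∀ j : Fin n,
      ((Finset.univ.filter fun i => i < j ∧ G.Adj i j).card ≤ 3) ∧
      ∀ i i' : Fin n, i < j → i' < j → G.Adj i j → G.Adj i' j → i ≠ i' → G.Adj i i')
    (α : Fin n → Fin n → ℂ)
    (hne : ∀ u v, G.Adj u v → α u v ≠ 0)
    (htri : ∀ u v w, G.Adj u v → G.Adj v w → G.Adj u w → α u w = -α u v * α v w) :
    ∀ v u : Fin n, u < v → G.Adj u v → pot G α v = pot G α u * (-α u v) := by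
  suffices H : ∀ m : ℕ, ∀ v : Fin n, (v : ℕ) < m → ∀ u : Fin n, u < v → G.Adj u v →
      pot G α v = pot G α u * (-α u v) by
    exact fun v => H ((v : ℕ) + 1) v (Nat.lt_succ_self _)
  intro m
  induction m using Nat.strongRecOn with
  | ind m ih =>
    intro v hv u hu hadj
    set S := Finset.univ.filter fun i => i < v ∧ G.Adj i v with hS
    have hmem : u ∈ S := Finset.mem_filter.mpr ⟨Finset.mem_univ _, hu, hadj⟩
    have h : S.Nonempty := ⟨u, hmem⟩
    set i := S.min' h with hi
    obtain ⟨hilt, hiadj⟩ := (Finset.mem_filter.mp (S.min'_mem h)).2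
    have hpotv : pot G α v = pot G α i * (-α i v) := by
      rw [pot]; simp only [← hS, dif_pos h, ← hi]
    by_cases heq : i = u
    · rw [hpotv, heq]
    · have hile : i ≤ u := S.min'_le u hmem
      have hilt' : i < u := lt_of_le_of_ne hile heq
      have hadj_iu : G.Adj i u := (hbuild v).2 i u hilt hu hiadj hadj heq
      have hiu : pot G α u = pot G α i * (-α i u) := ih (v : ℕ) hv u hu i hilt' hadj_iu
      have htr : α i v = -α i u * α u v := htri i u v hadj_iu hadj hiadj
      rw [hpotv, hiu, htr]
      ring

lemma pot_adj' {n : ℕ} (G : SimpleGraph (Fin n)) [DecidableRel G.Adj]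
    (hbuild : ∀ j : Fin n,
      ((Finset.univ.filter fun i => i < j ∧ G.Adj i j).card ≤ 3) ∧
      ∀ i i' : Fin n, i < j → i' < j → G.Adj i j → G.Adj i' j → i ≠ i' → G.Adj i i')
    (α : Fin n → Fin n → ℂ)
    (hne : ∀ u v, G.Adj u v → α u v ≠ 0)
    (hrec : ∀ u v, G.Adj u v → α u v * α v u = 1)
    (htri : ∀ u v w, G.Adj u v → G.Adj v w → G.Adj u w → α u w = -α u v * α v w) :
    ∀ u v : Fin n, G.Adj u v → pot G α v = pot G α u * (-α u v) := by
  intro u v hadj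
  rcases lt_trichotomy u v with h | h | h
  · exact pot_adj G hbuild α hne htri v u h hadj
  · exact absurd h (G.ne_of_adj hadj)
  · have : pot G α u = pot G α v * (-α v u) := pot_adj G hbuild α hne htri u v h hadj.symm
    rw [this, mul_assoc, neg_mul_neg, mul_comm (α v u), hrec u v hadj, mul_one]

theorem stmt5 (n : ℕ) (G : SimpleGraph (Fin n)) [DecidableRel G.Adj]
    (hbuild : ∀ j : Fin n,
      ((Finset.univ.filter fun i => i < j ∧ G.Adj i j).card ≤ 3) ∧
      ∀ i i' : Fin n, i < j → i' < j → G.Adj i j → G.Adj i' j → i ≠ i' → G.Adj i i')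
    (α : Fin n → Fin n → ℂ)
    (hne : ∀ u v, G.Adj u v → α u v ≠ 0)
    (hrec : ∀ u v, G.Adj u v → α u v * α v u = 1)
    (htri : ∀ u v w, G.Adj u v → G.Adj v w → G.Adj u w → α u w = -α u v * α v w) :
    ∀ (v : Fin n) (w : G.Walk v v) (μ : ℂ), μ ≠ 0 →
      ((w.darts.map fun d => -α d.toProd.1 d.toProd.2).prod) * μ = μ := by
  have key : ∀ (a b : Fin n) (p : G.Walk a b),
      ((p.darts.map fun d => -α d.toProd.1 d.toProd.2).prod) * pot G α a = pot G α b := by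
    intro a b p
    induction p with
    | nil => simp
    | cons hadj p ih =>
      rename_i x y z
      rw [SimpleGraph.Walk.darts_cons, List.map_cons, List.prod_cons]
      have : pot G α y = pot G α x * (-α x y) := pot_adj' G hbuild α hne hrec htri x y hadj
      calc (-α x y) * ((p.darts.map fun d => -α d.toProd.1 d.toProd.2).prod) * pot G α x
          = ((p.darts.map fun d => -α d.toProd.1 d.toProd.2).prod) * (pot G α x * (-α x y)) := by ring
        _ = ((p.darts.map fun d => -α d.toProd.1 d.toProd.2).prod) * pot G α y := by rw [← this]
        _ = pot G α z := ih
  intro v w μ hμ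
  have h1 := key v v w
  have h2 := pot_ne G α hne v
  have : ((w.darts.map fun d => -α d.toProd.1 d.toProd.2).prod) = 1 := by
    field_simp at h1
    tauto
  rw [this, one_mul]
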